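/- arXiv:2507.11125 — 5 statements merged into one kernel-verified Lean document; each statement's English description precedes it below -/
import Mathlib

section
/- Let g be a compact Lie algebra of rank two and let h be a nonzero Lie subalgebra of g whose normalizer in g does not contain a Cartan subalgebra of g (i.e. h is not regular). Then h equals its own normalizer in g. -/
/-! If `h ⊊ n(h)`, the invariant inner product `Φ` yields a nonzero `x ∈ n(h)` orthogonal to `h`.
For `y ∈ h`, invariance gives `Φ [x,y] [x,y] = Φ x [y,[x,y]] = 0`, since `[y,[x,y]] ∈ h`; so `x`
centralizes `h`. With any nonzero `y ∈ h`, the span of `x` and `y` is then a two-dimensional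
abelian subalgebra of `n(h)`, which in rank two is already maximal abelian: `h` would be regular. -/

open Module

/-- A real Lie algebra is *compact* if it admits an ad-invariant inner product. -/
def IsCompactLieAlgebra (g : Type*) [LieRing g] [LieAlgebra ℝ g] : Prop :=
  ∃ Φ : g →ₗ[ℝ] g →ₗ[ℝ] ℝ,
    (∀ x : g, x ≠ 0 → 0 < Φ x x) ∧ (∀ x y : g, Φ x y = Φ y x) ∧
    (∀ x y z : g, Φ ⁅x, y⁆ z = - Φ y ⁅x, z⁆)

/-- A Cartan subalgebra of a compact Lie algebra: a maximal abelian Lie subalgebra. -/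
def IsMaxAbelian {g : Type*} [LieRing g] [LieAlgebra ℝ g] (t : LieSubalgebra ℝ g) : Prop :=
  IsLieAbelian ↥t ∧ ∀ t' : LieSubalgebra ℝ g, IsLieAbelian ↥t' → t ≤ t' → t' = t

theorem LieSubalgebra.finrank_lieSpan_pair {K L : Type*} [Field K] [LieRing L] [LieAlgebra K L]
    {x y : L} (hxy : ⁅x, y⁆ = 0) (hx : x ≠ 0) (hy : ∀ a : K, a • x ≠ y) :
    finrank K (LieSubalgebra.lieSpan K L {x, y}) = 2 := by
  classical
  have hcomm : ∀ᵉ (u ∈ ({x, y} : Set L)) (v ∈ ({x, y} : Set L)), ⁅u, v⁆ = 0 := by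
    simp [hxy, ← lie_skew y x]
  have hne : x ≠ y := by simpa using hy 1
  change finrank K (LieSubalgebra.lieSpan K L {x, y}).toSubmodule = 2
  rw [LieSubalgebra.coe_lieSpan_eq_span_of_forall_lie_eq_zero hcomm,
    finrank_span_set_eq_card (linearIndepOn_id_pair hx hy)]
  simp [hne]

theorem Submodule.exists_mem_ne_zero_forall_apply_eq_zero_of_lt {K V : Type*} [Field K]
    [AddCommGroup V] [Module K V] [FiniteDimensional K V] (B : V →ₗ[K] V →ₗ[K] K)
    {p q : Submodule K V} (hpq : p < q) : ∃ x ∈ q, x ≠ 0 ∧ ∀ y ∈ p, B x y = 0 := by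
  have hker : LinearMap.ker (B.domRestrict₁₂ q p) ≠ ⊥ :=
    LinearMap.ker_ne_bot_of_finrank_lt <| by
      rw [Subspace.dual_finrank_eq]
      exact Submodule.finrank_lt_finrank_of_lt hpq
  obtain ⟨x, hx, hx0⟩ := (Submodule.ne_bot_iff _).mp hker
  refine ⟨x, x.2, fun h ↦ hx0 (Subtype.ext h), fun y hy ↦ ?_⟩
  exact LinearMap.congr_fun (LinearMap.mem_ker.mp hx) ⟨y, hy⟩

section MaxAbelian

variable {g : Type*} [LieRing g] [LieAlgebra ℝ g]

theorem isMaxAbelian_iff_maximal {t : LieSubalgebra ℝ g} :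
    IsMaxAbelian t ↔ Maximal (fun s : LieSubalgebra ℝ g ↦ IsLieAbelian s) t :=
  and_congr_right fun _ ↦ forall_congr' fun _ ↦ imp_congr_right fun _ ↦
    imp_congr_right fun hts ↦ ⟨fun h ↦ h.le, fun h ↦ le_antisymm h hts⟩

theorem IsLieAbelian.exists_isMaxAbelian_ge [FiniteDimensional ℝ g] {t : LieSubalgebra ℝ g}
    (ht : IsLieAbelian t) : ∃ t', t ≤ t' ∧ IsMaxAbelian t' := by
  simpa only [isMaxAbelian_iff_maximal] using exists_maximal_ge_of_wellFoundedGT _ t ht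

theorem IsLieAbelian.isMaxAbelian_of_finrank_le [FiniteDimensional ℝ g] {t : LieSubalgebra ℝ g}
    (ht : IsLieAbelian t)
    (hrank : ∀ t' : LieSubalgebra ℝ g, IsMaxAbelian t' → finrank ℝ t' ≤ finrank ℝ t) :
    IsMaxAbelian t := by
  obtain ⟨t', htt', ht'⟩ := ht.exists_isMaxAbelian_ge
  have : t.toSubmodule = t'.toSubmodule :=
    Submodule.eq_of_le_of_finrank_le htt' (hrank t' ht')
  rwa [LieSubalgebra.toSubmodule_injective this]

end MaxAbelian

theorem LieSubalgebra.lie_eq_zero_of_mem_normalizer {g : Type*} [LieRing g] [LieAlgebra ℝ g]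
    (Φ : g →ₗ[ℝ] g →ₗ[ℝ] ℝ) (hpos : ∀ x : g, x ≠ 0 → 0 < Φ x x)
    (hinv : ∀ x y z : g, Φ ⁅x, y⁆ z = -Φ y ⁅x, z⁆) {h : LieSubalgebra ℝ g} {x y : g}
    (hx : x ∈ h.normalizer) (hxh : ∀ z ∈ h, Φ x z = 0) (hy : y ∈ h) : ⁅x, y⁆ = 0 := by
  have hxy : ⁅x, y⁆ ∈ h := (h.mem_normalizer_iff x).mp hx y hy
  by_contra hne
  refine (hpos _ hne).ne' ?_
  calc Φ ⁅x, y⁆ ⁅x, y⁆ = -Φ ⁅y, x⁆ ⁅x, y⁆ := by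
        rw [← lie_skew y x, map_neg, LinearMap.neg_apply, neg_neg]
    _ = Φ x ⁅y, ⁅x, y⁆⁆ := by rw [hinv, neg_neg]
    _ = 0 := hxh _ (h.lie_mem hy hxy)

/-- If `g` is a compact Lie algebra of rank two and `h` is a nonzero non-regular subalgebra
(its normalizer contains no Cartan subalgebra of `g`), then `h` is self-normalizing. -/
theorem selfNormalizing_of_nonregular (g : Type*) [LieRing g] [LieAlgebra ℝ g]
    [FiniteDimensional ℝ g] (hcpt : IsCompactLieAlgebra g)
    (hrank : ∀ t : LieSubalgebra ℝ g, IsMaxAbelian t → finrank ℝ t = 2)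
    (h : LieSubalgebra ℝ g) (hne : h ≠ ⊥)
    (hnotreg : ¬ ∃ t : LieSubalgebra ℝ g, IsMaxAbelian t ∧ t ≤ h.normalizer) :
    h.normalizer = h := by
  obtain ⟨Φ, hpos, -, hinv⟩ := hcpt
  by_contra hself
  obtain ⟨x, hxN, hx0, hxh⟩ := Submodule.exists_mem_ne_zero_forall_apply_eq_zero_of_lt Φ
    (p := h.toSubmodule) (q := h.normalizer.toSubmodule) (h.le_normalizer.lt_of_ne' hself)
  have hx : x ∉ h := fun hx ↦ (hpos x hx0).ne' (hxh x hx)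
  obtain ⟨y, hy, hy0⟩ := (Submodule.ne_bot_iff h.toSubmodule).mp (by simpa using hne)
  have hyx : ⁅y, x⁆ = 0 := by
    rw [← lie_skew, h.lie_eq_zero_of_mem_normalizer Φ hpos hinv hxN hxh hy, neg_zero]
  have hindep : ∀ a : ℝ, a • y ≠ x := fun a hax ↦ hx (hax ▸ h.smul_mem a hy)
  set t := LieSubalgebra.lieSpan ℝ g {y, x}
  have ht : IsMaxAbelian t := by
    refine IsLieAbelian.isMaxAbelian_of_finrank_le ?_ fun t' ht' ↦ ?_
    · simp [t, hyx, ← lie_skew x y]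
    · rw [hrank t' ht', LieSubalgebra.finrank_lieSpan_pair hyx hy0 hindep]
  exact hnotreg ⟨t, ht, LieSubalgebra.lieSpan_le.mpr
    (Set.insert_subset_iff.mpr ⟨h.le_normalizer hy, Set.singleton_subset_iff.mpr hxN⟩)⟩
end

section
/- Let g be a compact Lie algebra of rank two and h a simple rank-one subalgebra of g that is not regular. Then the centralizer of h in g is trivial: c_g(h) = {0}. -/
open Module

/-!
If `X ≠ 0` centralizes `h`, pick `H ≠ 0` in `h`. As the centre of the simple algebra `h` is
trivial, `X ∉ h`, so `X` and `H` are linearly independent commuting elements. They span a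
two-dimensional abelian subalgebra, which is maximal abelian because every maximal abelian
subalgebra of `g` has dimension two. It normalizes `h` (`X` centralizes `h`, `H` lies in `h`),
so `h` would be regular.
-/

theorem LieSubalgebra.eq_zero_of_mem_of_forall_lie_eq_zero {R L : Type*} [CommRing R]
    [LieRing L] [LieAlgebra R L] {h : LieSubalgebra R L} [LieModule.IsFaithful R h h] {X : L}
    (hXh : X ∈ h) (hX : ∀ Y ∈ h, ⁅X, Y⁆ = 0) : X = 0 := by
  have hcenter : (⟨X, hXh⟩ : h) ∈ LieAlgebra.center R h := by
    rw [LieModule.mem_maxTrivSubmodule]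
    intro Y
    rw [← lie_skew, neg_eq_zero]
    exact Subtype.ext (hX Y Y.2)
  simpa [LieAlgebra.center_eq_bot, Subtype.ext_iff] using hcenter

theorem exists_isMaxAbelian_ge {g : Type*} [LieRing g] [LieAlgebra ℝ g] [IsNoetherian ℝ g]
    (s : LieSubalgebra ℝ g) (hs : IsLieAbelian s) : ∃ t, IsMaxAbelian t ∧ s ≤ t := by
  obtain ⟨t, hst, ht, htmax⟩ :=
    exists_maximal_ge_of_wellFoundedGT (fun t : LieSubalgebra ℝ g ↦ IsLieAbelian t) s hs
  exact ⟨t, ⟨ht, fun t' ht' htt' ↦ (htmax ht' htt').antisymm htt'⟩, hst⟩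

theorem isMaxAbelian_lieSpan_pair {g : Type*} [LieRing g] [LieAlgebra ℝ g]
    [FiniteDimensional ℝ g] (hrank : ∀ t : LieSubalgebra ℝ g, IsMaxAbelian t → finrank ℝ t = 2)
    {X Y : g} (hXY : ⁅X, Y⁆ = 0) (hli : LinearIndependent ℝ ![X, Y]) :
    IsMaxAbelian (LieSubalgebra.lieSpan ℝ g {X, Y}) := by
  set s := LieSubalgebra.lieSpan ℝ g {X, Y}
  have hcomm : ∀ᵉ (x ∈ ({X, Y} : Set g)) (y ∈ ({X, Y} : Set g)), ⁅x, y⁆ = 0 := by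
    simp [hXY, ← lie_skew Y X]
  have hab : IsLieAbelian s := LieSubalgebra.isLieAbelian_lieSpan_iff.mpr hcomm
  have hspan : (s : Submodule ℝ g) = Submodule.span ℝ {X, Y} :=
    LieSubalgebra.coe_lieSpan_eq_span_of_forall_lie_eq_zero hcomm
  have hs2 : finrank ℝ s = 2 := by
    change finrank ℝ (s : Submodule ℝ g) = 2
    rw [hspan, ← Matrix.range_cons_cons_empty X Y ![], finrank_span_eq_card hli, Fintype.card_fin]
  obtain ⟨t, ht, hst⟩ := exists_isMaxAbelian_ge s hab
  convert ht
  exact LieSubalgebra.toSubmodule_injective <|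
    Submodule.eq_of_le_of_finrank_le hst ((hrank t ht).trans hs2.symm).le

theorem centralizer_trivial_of_nonregular_general (g : Type*) [LieRing g] [LieAlgebra ℝ g]
    [FiniteDimensional ℝ g]
    (hrank : ∀ t : LieSubalgebra ℝ g, IsMaxAbelian t → finrank ℝ t = 2)
    (h : LieSubalgebra ℝ g) (hs : LieAlgebra.IsSimple ℝ ↥h)
    (hnotreg : ¬ ∃ t : LieSubalgebra ℝ g, IsMaxAbelian t ∧ t ≤ h.normalizer) :
    ∀ X : g, (∀ Y ∈ h, ⁅X, Y⁆ = 0) → X = 0 := by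
  intro X hX
  by_contra hX0
  have : Nontrivial h := LieAlgebra.IsSimple.nontrivial ℝ h
  obtain ⟨⟨H, hHh⟩, hH0⟩ := exists_ne (0 : h)
  have hXh : X ∉ h := fun hXh ↦ hX0 (h.eq_zero_of_mem_of_forall_lie_eq_zero hXh hX)
  have hli : LinearIndependent ℝ ![H, X] :=
    (LinearIndependent.pair_iff' fun hH ↦ hH0 (Subtype.ext hH)).mpr
      fun a haX ↦ hXh (haX ▸ h.smul_mem a hHh)
  refine hnotreg ⟨_, isMaxAbelian_lieSpan_pair hrank ?_ hli, ?_⟩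
  · rw [← lie_skew, hX H hHh, neg_zero]
  · rw [LieSubalgebra.lieSpan_le, Set.insert_subset_iff, Set.singleton_subset_iff]
    refine ⟨h.le_normalizer hHh, ?_⟩
    exact (h.mem_normalizer_iff X).mpr fun Y hY ↦ (hX Y hY).symm ▸ h.zero_mem

/-- If `g` is a compact Lie algebra of rank two and `h` a simple rank-one subalgebra of `g`
that is not regular, then the centralizer of `h` in `g` is trivial. -/
theorem centralizer_trivial_of_nonregular (g : Type*) [LieRing g] [LieAlgebra ℝ g]
    [FiniteDimensional ℝ g] (hcpt : IsCompactLieAlgebra g)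
    (hrank : ∀ t : LieSubalgebra ℝ g, IsMaxAbelian t → finrank ℝ t = 2)
    (h : LieSubalgebra ℝ g) (hs : LieAlgebra.IsSimple ℝ ↥h)
    (hrk1 : ∀ t : LieSubalgebra ℝ ↥h, IsMaxAbelian t → finrank ℝ t = 1)
    (hnotreg : ¬ ∃ t : LieSubalgebra ℝ g, IsMaxAbelian t ∧ t ≤ h.normalizer) :
    ∀ X : g, (∀ Y ∈ h, ⁅X, Y⁆ = 0) → X = 0 :=
  centralizer_trivial_of_nonregular_general g hrank h hs hnotreg
end

section
/- Let G be a compact connected simple Lie group with Lie algebra g and Killing form B, let Λ : g → g be a B-symmetric endomorphism defining a left-invariant geodesic-orbit metric with respect to a subgroup H with Lie algebra h (i.e. for every X ∈ g there exists W ∈ h with [W + X, Λ X] = 0, and Λ is ad_h-equivariant). If g₁, g₂ ⊆ g are eigenspaces of Λ with eigenvalues λ₁, λ₂ and the bracket [g₁, g₂] has nonzero B-orthogonal projection onto the B-orthogonal complement of g₁ ⊕ g₂, then λ₁ = λ₂. -/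
open Module

/-!
Apply the geodesic orbit condition to `X = X₁ + X₂` with `Xᵢ` in the `λᵢ`-eigenspace. Expanding
`[W + X₁ + X₂, λ₁ X₁ + λ₂ X₂] = 0` gives
`λ₁ [W, X₁] + λ₂ [W, X₂] + (λ₂ - λ₁) [X₁, X₂] = 0`.
Since `Λ` commutes with `ad_W`, the vector `[W, Xᵢ]` lies again in the `λᵢ`-eigenspace, so pairing
with a vector `Z` orthogonal to both eigenspaces leaves `(λ₂ - λ₁) B(Z, [X₁, X₂]) = 0`.
-/

namespace GeodesicOrbit

open LinearMap (ker)

variable {R L : Type*} [CommRing R] [LieRing L] [LieAlgebra R L]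

theorem mem_ker_sub_smul_id_iff {M : Type*} [AddCommGroup M] [Module R M] (f : M →ₗ[R] M)
    (a : R) (x : M) : x ∈ ker (f - a • LinearMap.id) ↔ f x = a • x := by
  simp [sub_eq_zero]

theorem lie_mem_ker_sub_smul_id {Λ : L →ₗ[R] L} {W x : L} {a : R}
    (hW : ∀ y, Λ ⁅W, y⁆ = ⁅W, Λ y⁆) (hx : x ∈ ker (Λ - a • LinearMap.id)) :
    ⁅W, x⁆ ∈ ker (Λ - a • LinearMap.id) := by
  rw [mem_ker_sub_smul_id_iff] at hx ⊢
  rw [hW, hx, lie_smul]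

theorem lie_add_add_smul_add_smul (W X₁ X₂ : L) (a₁ a₂ : R) :
    ⁅W + (X₁ + X₂), a₁ • X₁ + a₂ • X₂⁆ =
      a₁ • ⁅W, X₁⁆ + a₂ • ⁅W, X₂⁆ + (a₂ - a₁) • ⁅X₁, X₂⁆ := by
  have hskew : ⁅X₂, X₁⁆ = -⁅X₁, X₂⁆ := (lie_skew X₂ X₁).symm
  simp only [add_lie, lie_add, lie_smul, lie_self, hskew]
  module

theorem eigenvalues_eq_of_apply_lie_ne_zero [NoZeroDivisors R] (Φ : L →ₗ[R] L →ₗ[R] R)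
    (Λ : L →ₗ[R] L) {W X₁ X₂ Z : L} {a₁ a₂ : R} (hW : ∀ y, Λ ⁅W, y⁆ = ⁅W, Λ y⁆)
    (hgo : ⁅W + (X₁ + X₂), Λ (X₁ + X₂)⁆ = 0)
    (hX₁ : X₁ ∈ ker (Λ - a₁ • LinearMap.id)) (hX₂ : X₂ ∈ ker (Λ - a₂ • LinearMap.id))
    (hZ₁ : ∀ u ∈ ker (Λ - a₁ • LinearMap.id), Φ Z u = 0)
    (hZ₂ : ∀ u ∈ ker (Λ - a₂ • LinearMap.id), Φ Z u = 0)
    (hne : Φ Z ⁅X₁, X₂⁆ ≠ 0) : a₁ = a₂ := by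
  have hsum : a₁ • ⁅W, X₁⁆ + a₂ • ⁅W, X₂⁆ + (a₂ - a₁) • ⁅X₁, X₂⁆ = 0 := by
    rwa [map_add, (mem_ker_sub_smul_id_iff Λ a₁ X₁).1 hX₁,
      (mem_ker_sub_smul_id_iff Λ a₂ X₂).1 hX₂, lie_add_add_smul_add_smul] at hgo
  have hpair : (a₂ - a₁) * Φ Z ⁅X₁, X₂⁆ = 0 := by
    simpa [hZ₁ _ (lie_mem_ker_sub_smul_id hW hX₁), hZ₂ _ (lie_mem_ker_sub_smul_id hW hX₂)]
      using congrArg (Φ Z) hsum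
  exact (sub_eq_zero.1 ((mul_eq_zero.1 hpair).resolve_right hne)).symm

end GeodesicOrbit

theorem eigenvalues_eq_of_bracket_projection_general (g : Type*) [LieRing g] [LieAlgebra ℝ g]
    [FiniteDimensional ℝ g]
    (h : LieSubalgebra ℝ g) (Λ : g →ₗ[ℝ] g)
    (hequiv : ∀ Z ∈ h, ∀ x : g, Λ ⁅Z, x⁆ = ⁅Z, Λ x⁆)
    (hgo : ∀ X : g, ∃ W ∈ h, ⁅W + X, Λ X⁆ = 0)
    (l₁ l₂ : ℝ)
    (hproj : ∃ X₁ ∈ LinearMap.ker (Λ - l₁ • (LinearMap.id : g →ₗ[ℝ] g)),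
      ∃ X₂ ∈ LinearMap.ker (Λ - l₂ • (LinearMap.id : g →ₗ[ℝ] g)), ∃ Z : g,
        (∀ u ∈ LinearMap.ker (Λ - l₁ • (LinearMap.id : g →ₗ[ℝ] g)),
          killingForm ℝ g Z u = 0) ∧
        (∀ u ∈ LinearMap.ker (Λ - l₂ • (LinearMap.id : g →ₗ[ℝ] g)),
          killingForm ℝ g Z u = 0) ∧
        killingForm ℝ g Z ⁅X₁, X₂⁆ ≠ 0) :
    l₁ = l₂ := by
  obtain ⟨X₁, hX₁, X₂, hX₂, Z, hZ₁, hZ₂, hne⟩ := hproj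
  obtain ⟨W, hWh, hW⟩ := hgo (X₁ + X₂)
  exact GeodesicOrbit.eigenvalues_eq_of_apply_lie_ne_zero (killingForm ℝ g) Λ (hequiv W hWh) hW
    hX₁ hX₂ hZ₁ hZ₂ hne

/-- Eigenvalue lemma for geodesic orbit metrics on a compact simple Lie group: if `Λ` is a
`B`-symmetric, `ad_h`-equivariant metric endomorphism satisfying the geodesic orbit
condition with respect to `h`, and the bracket of the `λ₁`- and `λ₂`-eigenspaces of `Λ`
has nonzero `B`-orthogonal projection onto the `B`-orthogonal complement of their sum,
then `λ₁ = λ₂`. -/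
theorem eigenvalues_eq_of_bracket_projection (g : Type*) [LieRing g] [LieAlgebra ℝ g]
    [FiniteDimensional ℝ g] (hcpt : IsCompactLieAlgebra g)
    (hsimple : LieAlgebra.IsSimple ℝ g)
    (h : LieSubalgebra ℝ g) (Λ : g →ₗ[ℝ] g)
    (hsymm : ∀ x y : g, killingForm ℝ g (Λ x) y = killingForm ℝ g x (Λ y))
    (hequiv : ∀ Z ∈ h, ∀ x : g, Λ ⁅Z, x⁆ = ⁅Z, Λ x⁆)
    (hgo : ∀ X : g, ∃ W ∈ h, ⁅W + X, Λ X⁆ = 0)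
    (l₁ l₂ : ℝ)
    (hproj : ∃ X₁ ∈ LinearMap.ker (Λ - l₁ • (LinearMap.id : g →ₗ[ℝ] g)),
      ∃ X₂ ∈ LinearMap.ker (Λ - l₂ • (LinearMap.id : g →ₗ[ℝ] g)), ∃ Z : g,
        (∀ u ∈ LinearMap.ker (Λ - l₁ • (LinearMap.id : g →ₗ[ℝ] g)),
          killingForm ℝ g Z u = 0) ∧
        (∀ u ∈ LinearMap.ker (Λ - l₂ • (LinearMap.id : g →ₗ[ℝ] g)),
          killingForm ℝ g Z u = 0) ∧
        killingForm ℝ g Z ⁅X₁, X₂⁆ ≠ 0) :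
    l₁ = l₂ :=
  eigenvalues_eq_of_bracket_projection_general g h Λ hequiv hgo l₁ l₂ hproj
end

section
/- Let g be a Lie algebra, h ⊆ g a subalgebra, and Λ : g → g a linear endomorphism commuting with ad_Z for all Z ∈ h, with eigenspaces g₁, g₂ for eigenvalues λ₁, λ₂. Suppose for every X ∈ g there exists W ∈ h with [W + X, ΛX] = 0. Then for all X₁ ∈ g₁ and X₂ ∈ g₂, the vector (λ₁ − λ₂)[X₁, X₂] lies in g₁ + g₂. -/
/-!
Apply the geodesic orbit condition to `X₁ + X₂`: expanding `[W + X₁ + X₂, λ₁X₁ + λ₂X₂] = 0`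
expresses `(λ₁ − λ₂)[X₁, X₂]` as `λ₁[W, X₁] + λ₂[W, X₂]`, and since `Λ` commutes with `ad_W`
for `W ∈ h`, the bracket `[W, Xᵢ]` stays in the eigenspace of `Xᵢ`.
-/

namespace LinearMap

variable {R M : Type*} [CommRing R] [AddCommGroup M] [Module R M]

theorem mem_ker_sub_smul_id_iff {f : M →ₗ[R] M} {l : R} {x : M} :
    x ∈ ker (f - l • id) ↔ f x = l • x := by
  rw [mem_ker, sub_apply, smul_apply, id_apply, sub_eq_zero]

end LinearMap

section

variable {R L : Type*} [CommRing R] [LieRing L] [LieAlgebra R L]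

theorem lie_mem_ker_sub_smul_id {Λ : L →ₗ[R] L} {W x : L} {l : R}
    (hW : ∀ y : L, Λ ⁅W, y⁆ = ⁅W, Λ y⁆) (hx : x ∈ LinearMap.ker (Λ - l • LinearMap.id)) :
    ⁅W, x⁆ ∈ LinearMap.ker (Λ - l • LinearMap.id) := by
  rw [LinearMap.mem_ker_sub_smul_id_iff] at hx ⊢
  rw [hW, hx, lie_smul]

theorem lie_add_add_smul_add_smul (W X₁ X₂ : L) (l₁ l₂ : R) :
    ⁅W + (X₁ + X₂), l₁ • X₁ + l₂ • X₂⁆ =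
      l₁ • ⁅W, X₁⁆ + l₂ • ⁅W, X₂⁆ - (l₁ - l₂) • ⁅X₁, X₂⁆ := by
  simp only [add_lie, lie_add, lie_smul, lie_self, ← lie_skew X₁ X₂]
  module

end

/-- Key computation in the eigenvalue lemma: if `Λ` commutes with `ad_Z` for all `Z` in a
subalgebra `h` and the geodesic orbit condition holds, then for eigenvectors `X₁, X₂` of `Λ`
with eigenvalues `λ₁, λ₂`, the vector `(λ₁ − λ₂)[X₁, X₂]` lies in the sum of the two
eigenspaces. -/
theorem bracket_mem_sum_eigenspaces (g : Type*) [LieRing g] [LieAlgebra ℝ g]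
    (h : LieSubalgebra ℝ g) (Λ : g →ₗ[ℝ] g)
    (hequiv : ∀ Z ∈ h, ∀ x : g, Λ ⁅Z, x⁆ = ⁅Z, Λ x⁆)
    (hgo : ∀ X : g, ∃ W ∈ h, ⁅W + X, Λ X⁆ = 0)
    (l₁ l₂ : ℝ) :
    ∀ X₁ ∈ LinearMap.ker (Λ - l₁ • (LinearMap.id : g →ₗ[ℝ] g)),
    ∀ X₂ ∈ LinearMap.ker (Λ - l₂ • (LinearMap.id : g →ₗ[ℝ] g)),
      (l₁ - l₂) • ⁅X₁, X₂⁆ ∈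
        LinearMap.ker (Λ - l₁ • (LinearMap.id : g →ₗ[ℝ] g)) ⊔
          LinearMap.ker (Λ - l₂ • (LinearMap.id : g →ₗ[ℝ] g)) := by
  intro X₁ hX₁ X₂ hX₂
  obtain ⟨W, hW, hbracket⟩ := hgo (X₁ + X₂)
  rw [map_add, LinearMap.mem_ker_sub_smul_id_iff.mp hX₁,
    LinearMap.mem_ker_sub_smul_id_iff.mp hX₂, lie_add_add_smul_add_smul, sub_eq_zero] at hbracket
  rw [← hbracket]
  exact Submodule.add_mem_sup
    (Submodule.smul_mem _ _ (lie_mem_ker_sub_smul_id (hequiv W hW) hX₁))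
    (Submodule.smul_mem _ _ (lie_mem_ker_sub_smul_id (hequiv W hW) hX₂))
end

section
/- Let g be a compact simple Lie algebra with Killing form B, and suppose g decomposes B-orthogonally as g = k ⊕ m₁ ⊕ m₂ ⊕ m₃, where the mᵢ are ad_k-invariant subspaces satisfying [mᵢ, mⱼ] ⊆ mₖ for distinct i, j, k, with [mᵢ, mⱼ] ≠ 0 for each pair of distinct i, j. Let Λ be a B-symmetric endomorphism acting as μᵢ·Id on each mᵢ and preserving k, satisfying the geodesic orbit condition with respect to h = k (for all X ∈ g there is W ∈ k with [W + X, ΛX] = 0) and ad_k-equivariance. Then μ₁ = μ₂ = μ₃. -/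
open scoped InnerProductSpace

theorem LinearMap.eq_zero_of_trace_comp_self_eq_zero {E : Type*} [NormedAddCommGroup E]
    [InnerProductSpace ℝ E] [FiniteDimensional ℝ E] {A : E →ₗ[ℝ] E}
    (hA : ∀ x y, ⟪A x, y⟫_ℝ = -⟪x, A y⟫_ℝ) (h : trace ℝ E (A ∘ₗ A) = 0) : A = 0 := by
  let b := stdOrthonormalBasis ℝ E
  have hterm : ∀ i, ⟪b i, A (A (b i))⟫_ℝ = -‖A (b i)‖ ^ 2 := fun i => by
    rw [real_inner_comm, hA, real_inner_self_eq_norm_sq]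
  have hsum : ∑ i, ‖A (b i)‖ ^ 2 = 0 := by
    simpa only [trace_eq_sum_inner _ b, comp_apply, hterm, Finset.sum_neg_distrib,
      neg_eq_zero] using h
  have hzero : ∀ i, A (b i) = 0 := fun i => by
    simpa using (Finset.sum_eq_zero_iff_of_nonneg (fun i _ => sq_nonneg ‖A (b i)‖)).mp hsum i
      (Finset.mem_univ i)
  exact b.toBasis.ext fun i => by simpa using hzero i

namespace IsCompactLieAlgebra

variable {g : Type*} [LieRing g] [LieAlgebra ℝ g] [FiniteDimensional ℝ g]

theorem mem_center_of_killingForm_self_eq_zero (hcpt : IsCompactLieAlgebra g) {v : g}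
    (hv : killingForm ℝ g v v = 0) : v ∈ LieAlgebra.center ℝ g := by
  obtain ⟨Φ, hpos, hsymm, hinv⟩ := hcpt
  let core : InnerProductSpace.Core ℝ g :=
    { inner := fun x y => Φ x y
      conj_inner_symm := fun x y => hsymm y x
      re_inner_nonneg := fun x => by
        rcases eq_or_ne x 0 with rfl | hx
        · simp
        · exact (hpos x hx).le
      add_left := fun x y z => by simp
      smul_left := fun x y r => by simp
      definite := fun x hx => by_contra fun h => (hpos x h).ne' hx }
  let _ : NormedAddCommGroup g := core.toNormedAddCommGroup
  let _ : InnerProductSpace ℝ g := InnerProductSpace.ofCore core.toCore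
  have had : LieAlgebra.ad ℝ g v = 0 := by
    refine LinearMap.eq_zero_of_trace_comp_self_eq_zero (fun x y => hinv v x y) ?_
    rwa [← killingForm_apply_apply]
  rw [← LieAlgebra.self_module_ker_eq_center, LieModule.mem_ker]
  exact fun x => LinearMap.congr_fun had x

theorem killingForm_self_ne_zero [LieModule.IsFaithful ℝ g g] (hcpt : IsCompactLieAlgebra g)
    {v : g} (hv : v ≠ 0) : killingForm ℝ g v v ≠ 0 := fun h => by
  simpa [hv] using hcpt.mem_center_of_killingForm_self_eq_zero h

end IsCompactLieAlgebra

theorem LinearMap.BilinForm.notMem_sup_of_apply_eq_zero {R M : Type*} [CommRing R] [AddCommGroup M]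
    [Module R M] {B : LinearMap.BilinForm R M} {p q : Submodule R M} {z : M}
    (hp : ∀ u ∈ p, B u z = 0) (hq : ∀ u ∈ q, B u z = 0) (hz : B z z ≠ 0) : z ∉ p ⊔ q := by
  intro hmem
  obtain ⟨u, hu, w, hw, huw⟩ := Submodule.mem_sup.mp hmem
  apply hz
  calc B z z = B (u + w) z := by rw [huw]
    _ = 0 := by rw [map_add, LinearMap.add_apply, hp u hu, hq w hw, add_zero]

def IsGeodesicOrbit {K g : Type*} [CommRing K] [LieRing g] [LieAlgebra K g]
    (k : LieSubalgebra K g) (Λ : g →ₗ[K] g) : Prop :=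
  ∀ X : g, ∃ W ∈ k, ⁅W + X, Λ X⁆ = 0

theorem lie_add_add_smul_add_smul_s11 {K g : Type*} [CommRing K] [LieRing g] [LieAlgebra K g]
    (W x y : g) (a b : K) :
    ⁅W + (x + y), a • x + b • y⁆ = a • ⁅W, x⁆ + b • ⁅W, y⁆ + (b - a) • ⁅x, y⁆ := by
  simp only [add_lie, lie_add, lie_smul, lie_self, add_zero, zero_add, ← lie_skew y x]
  module

namespace IsGeodesicOrbit

variable {K g : Type*} [Field K] [LieRing g] [LieAlgebra K g] {k : LieSubalgebra K g}
  {Λ : g →ₗ[K] g} {mi mj : Submodule K g} {μi μj : K}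

theorem eq_of_lie_notMem_sup (hgo : IsGeodesicOrbit k Λ)
    (hinvi : ∀ Z ∈ k, ∀ x ∈ mi, ⁅Z, x⁆ ∈ mi) (hinvj : ∀ Z ∈ k, ∀ x ∈ mj, ⁅Z, x⁆ ∈ mj)
    (hΛi : ∀ x ∈ mi, Λ x = μi • x) (hΛj : ∀ x ∈ mj, Λ x = μj • x)
    {x y : g} (hx : x ∈ mi) (hy : y ∈ mj) (hxy : ⁅x, y⁆ ∉ mi ⊔ mj) : μi = μj := by
  obtain ⟨W, hW, hgoW⟩ := hgo (x + y)
  rw [map_add, hΛi x hx, hΛj y hy, lie_add_add_smul_add_smul_s11, add_eq_zero_iff_neg_eq] at hgoW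
  have hmem : (μj - μi) • ⁅x, y⁆ ∈ mi ⊔ mj := by
    rw [← hgoW]
    exact neg_mem (add_mem (Submodule.mem_sup_left (mi.smul_mem _ (hinvi W hW x hx)))
      (Submodule.mem_sup_right (mj.smul_mem _ (hinvj W hW y hy))))
  by_contra hne
  exact hxy ((Submodule.smul_mem_iff _ (sub_ne_zero.mpr (Ne.symm hne))).mp hmem)

end IsGeodesicOrbit

theorem IsGeodesicOrbit.eq_of_lie_ne_zero_of_killing_orthogonal {g : Type*} [LieRing g]
    [LieAlgebra ℝ g] [FiniteDimensional ℝ g] [LieModule.IsFaithful ℝ g g]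
    (hcpt : IsCompactLieAlgebra g) {k : LieSubalgebra ℝ g} {Λ : g →ₗ[ℝ] g}
    {mi mj mk : Submodule ℝ g} {μi μj : ℝ} (hgo : IsGeodesicOrbit k Λ)
    (hinvi : ∀ Z ∈ k, ∀ x ∈ mi, ⁅Z, x⁆ ∈ mi) (hinvj : ∀ Z ∈ k, ∀ x ∈ mj, ⁅Z, x⁆ ∈ mj)
    (hΛi : ∀ x ∈ mi, Λ x = μi • x) (hΛj : ∀ x ∈ mj, Λ x = μj • x)
    (horthi : ∀ x ∈ mi, ∀ y ∈ mk, killingForm ℝ g x y = 0)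
    (horthj : ∀ x ∈ mj, ∀ y ∈ mk, killingForm ℝ g x y = 0)
    (hbr : ∀ x ∈ mi, ∀ y ∈ mj, ⁅x, y⁆ ∈ mk) (hnz : ∃ x ∈ mi, ∃ y ∈ mj, ⁅x, y⁆ ≠ 0) :
    μi = μj := by
  obtain ⟨x, hx, y, hy, hxy⟩ := hnz
  refine hgo.eq_of_lie_notMem_sup hinvi hinvj hΛi hΛj hx hy ?_
  exact LinearMap.BilinForm.notMem_sup_of_apply_eq_zero
    (fun u hu => horthi u hu _ (hbr x hx y hy)) (fun u hu => horthj u hu _ (hbr x hx y hy))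
    (hcpt.killingForm_self_ne_zero hxy)

theorem generalized_wallach_eigenvalues_eq_general (g : Type*) [LieRing g] [LieAlgebra ℝ g]
    [FiniteDimensional ℝ g] (hcpt : IsCompactLieAlgebra g)
    (hsimple : LieAlgebra.IsSimple ℝ g)
    (k : LieSubalgebra ℝ g) (m₁ m₂ m₃ : Submodule ℝ g)
    (horth12 : ∀ x ∈ m₁, ∀ y ∈ m₂, killingForm ℝ g x y = 0)
    (horth13 : ∀ x ∈ m₁, ∀ y ∈ m₃, killingForm ℝ g x y = 0)
    (horth23 : ∀ x ∈ m₂, ∀ y ∈ m₃, killingForm ℝ g x y = 0)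
    (hinv₁ : ∀ Z ∈ k, ∀ x ∈ m₁, ⁅Z, x⁆ ∈ m₁)
    (hinv₂ : ∀ Z ∈ k, ∀ x ∈ m₂, ⁅Z, x⁆ ∈ m₂)
    (hinv₃ : ∀ Z ∈ k, ∀ x ∈ m₃, ⁅Z, x⁆ ∈ m₃)
    (hbr12 : ∀ x ∈ m₁, ∀ y ∈ m₂, ⁅x, y⁆ ∈ m₃)
    (hbr13 : ∀ x ∈ m₁, ∀ y ∈ m₃, ⁅x, y⁆ ∈ m₂)
    (hnz12 : ∃ x ∈ m₁, ∃ y ∈ m₂, ⁅x, y⁆ ≠ 0)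
    (hnz13 : ∃ x ∈ m₁, ∃ y ∈ m₃, ⁅x, y⁆ ≠ 0)
    (Λ : g →ₗ[ℝ] g) (μ₁ μ₂ μ₃ : ℝ)
    (hΛ₁ : ∀ x ∈ m₁, Λ x = μ₁ • x)
    (hΛ₂ : ∀ x ∈ m₂, Λ x = μ₂ • x)
    (hΛ₃ : ∀ x ∈ m₃, Λ x = μ₃ • x)
    (hgo : ∀ X : g, ∃ W ∈ k, ⁅W + X, Λ X⁆ = 0) :
    μ₁ = μ₂ ∧ μ₂ = μ₃ := by
  have hgo : IsGeodesicOrbit k Λ := hgo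
  have horth32 : ∀ x ∈ m₃, ∀ y ∈ m₂, killingForm ℝ g x y = 0 := fun x hx y hy => by
    rw [LieModule.traceForm_comm]
    exact horth23 y hy x hx
  have h12 : μ₁ = μ₂ := hgo.eq_of_lie_ne_zero_of_killing_orthogonal hcpt hinv₁ hinv₂ hΛ₁ hΛ₂
    horth13 horth23 hbr12 hnz12
  have h13 : μ₁ = μ₃ := hgo.eq_of_lie_ne_zero_of_killing_orthogonal hcpt hinv₁ hinv₃ hΛ₁ hΛ₃
    horth12 horth32 hbr13 hnz13
  exact ⟨h12, h12.symm.trans h13⟩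

/-- Generalized Wallach situation: if a compact simple Lie algebra `g` decomposes
Killing-orthogonally as `g = k ⊕ m₁ ⊕ m₂ ⊕ m₃` with `[mᵢ, mⱼ] ⊆ mₖ` (nonzero) for distinct
indices, and a Killing-symmetric, `ad_k`-equivariant endomorphism `Λ` acting as `μᵢ·Id` on
each `mᵢ` and preserving `k` satisfies the geodesic orbit condition with respect to `k`,
then `μ₁ = μ₂ = μ₃`. -/
theorem generalized_wallach_eigenvalues_eq (g : Type*) [LieRing g] [LieAlgebra ℝ g]
    [FiniteDimensional ℝ g] (hcpt : IsCompactLieAlgebra g)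
    (hsimple : LieAlgebra.IsSimple ℝ g)
    (k : LieSubalgebra ℝ g) (m₁ m₂ m₃ : Submodule ℝ g)
    (hdecomp : k.toSubmodule ⊔ m₁ ⊔ m₂ ⊔ m₃ = ⊤)
    (horthk : ∀ x ∈ k, (∀ y ∈ m₁, killingForm ℝ g x y = 0) ∧
      (∀ y ∈ m₂, killingForm ℝ g x y = 0) ∧ (∀ y ∈ m₃, killingForm ℝ g x y = 0))
    (horth12 : ∀ x ∈ m₁, ∀ y ∈ m₂, killingForm ℝ g x y = 0)
    (horth13 : ∀ x ∈ m₁, ∀ y ∈ m₃, killingForm ℝ g x y = 0)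
    (horth23 : ∀ x ∈ m₂, ∀ y ∈ m₃, killingForm ℝ g x y = 0)
    (hinv₁ : ∀ Z ∈ k, ∀ x ∈ m₁, ⁅Z, x⁆ ∈ m₁)
    (hinv₂ : ∀ Z ∈ k, ∀ x ∈ m₂, ⁅Z, x⁆ ∈ m₂)
    (hinv₃ : ∀ Z ∈ k, ∀ x ∈ m₃, ⁅Z, x⁆ ∈ m₃)
    (hbr12 : ∀ x ∈ m₁, ∀ y ∈ m₂, ⁅x, y⁆ ∈ m₃)
    (hbr13 : ∀ x ∈ m₁, ∀ y ∈ m₃, ⁅x, y⁆ ∈ m₂)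
    (hbr23 : ∀ x ∈ m₂, ∀ y ∈ m₃, ⁅x, y⁆ ∈ m₁)
    (hnz12 : ∃ x ∈ m₁, ∃ y ∈ m₂, ⁅x, y⁆ ≠ 0)
    (hnz13 : ∃ x ∈ m₁, ∃ y ∈ m₃, ⁅x, y⁆ ≠ 0)
    (hnz23 : ∃ x ∈ m₂, ∃ y ∈ m₃, ⁅x, y⁆ ≠ 0)
    (Λ : g →ₗ[ℝ] g) (μ₁ μ₂ μ₃ : ℝ)
    (hsymm : ∀ x y : g, killingForm ℝ g (Λ x) y = killingForm ℝ g x (Λ y))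
    (hequiv : ∀ Z ∈ k, ∀ x : g, Λ ⁅Z, x⁆ = ⁅Z, Λ x⁆)
    (hΛk : ∀ x ∈ k, Λ x ∈ k.toSubmodule)
    (hΛ₁ : ∀ x ∈ m₁, Λ x = μ₁ • x)
    (hΛ₂ : ∀ x ∈ m₂, Λ x = μ₂ • x)
    (hΛ₃ : ∀ x ∈ m₃, Λ x = μ₃ • x)
    (hgo : ∀ X : g, ∃ W ∈ k, ⁅W + X, Λ X⁆ = 0) :
    μ₁ = μ₂ ∧ μ₂ = μ₃ :=
  generalized_wallach_eigenvalues_eq_general g hcpt hsimple k m₁ m₂ m₃ horth12 horth13 horth23 hinv₁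
    hinv₂ hinv₃ hbr12 hbr13 hnz12 hnz13 Λ μ₁ μ₂ μ₃ hΛ₁ hΛ₂ hΛ₃ hgo
end
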